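/- arXiv:1712.08846 — 4 statements merged into one kernel-verified Lean document; each statement's English description precedes it below -/
import Mathlib

section
/- (Block generalized Rayleigh quotient bound) Let A and B be Hermitian M×M matrices with B positive definite, and let λ₁ ≥ λ₂ ≥ … ≥ λ_M be the generalized eigenvalues of the pencil (A, B) (i.e., the eigenvalues of B^{-1/2} A B^{-1/2}). Then for every full-column-rank matrix V ∈ ℂ^{M×T}, tr((VᴴBV)⁻¹ VᴴAV) ≤ λ₁ + λ₂ + … + λ_T. -/
open Matrix
open scoped ComplexOrder

/-- The square root of a positive semidefinite matrix (removed from Mathlib; old definition). -/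
noncomputable def Matrix.PosSemidef.sqrt {n 𝕜 : Type*} [Fintype n] [RCLike 𝕜] [DecidableEq n]
    {A : Matrix n n 𝕜} (hA : A.PosSemidef) : Matrix n n 𝕜 :=
  hA.1.eigenvectorUnitary.1 * diagonal ((↑) ∘ Real.sqrt ∘ hA.1.eigenvalues) *
    (star hA.1.eigenvectorUnitary : Matrix n n 𝕜)

/-!
Whitening reduces the pencil to a single Hermitian matrix: with `S = B^{1/2}` and `W = S V`,
the quotient is `tr((WᴴW)⁻¹ Wᴴ C W)` for `C = S⁻¹ A S⁻¹ = U D Uᴴ`, and orthonormalising `W` by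
`R = (WᴴW)^{-1/2}` turns it into `tr(Kᴴ D K)` for the isometry `K = Uᴴ W R`. This trace is
`∑ λᵢ tᵢ` with row weights `tᵢ = ∑ⱼ |Kᵢⱼ|² ∈ [0, 1]` summing to `T`, and any such weighted sum of
the decreasing `λᵢ` is at most `λ₁ + ⋯ + λ_T`.
-/

open Finset

theorem Finset.sum_mul_le_sum_of_sum_eq_card {ι : Type*} [Fintype ι] (s : Finset ι)
    (lam t : ι → ℝ) (hs : ∀ i ∈ s, ∀ j ∉ s, lam j ≤ lam i)
    (ht₀ : ∀ i, 0 ≤ t i) (ht₁ : ∀ i, t i ≤ 1) (hsum : ∑ i, t i = #s) :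
    ∑ i, lam i * t i ≤ ∑ i ∈ s, lam i := by
  classical
  obtain ⟨c, hcs, hc_compl⟩ : ∃ c, (∀ i ∈ s, c ≤ lam i) ∧ ∀ j ∉ s, lam j ≤ c := by
    by_cases h : sᶜ.Nonempty
    · exact ⟨sᶜ.sup' h lam, fun i hi => sup'_le _ _ fun j hj => hs i hi j (mem_compl.mp hj),
        fun j hj => le_sup' lam (mem_compl.mpr hj)⟩
    · obtain ⟨c, hc⟩ := (Set.finite_range lam).bddBelow
      exact ⟨c, fun i _ => hc ⟨i, rfl⟩, fun j hj => absurd ⟨j, mem_compl.mpr hj⟩ h⟩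
  have hterm : ∀ i, (lam i - c) * (t i - if i ∈ s then 1 else 0) ≤ 0 := by
    intro i
    split_ifs with hi
    · exact mul_nonpos_of_nonneg_of_nonpos (by linarith [hcs i hi]) (by linarith [ht₁ i])
    · exact mul_nonpos_of_nonpos_of_nonneg (by linarith [hc_compl i hi]) (by linarith [ht₀ i])
  have hexpand : ∑ i, (lam i - c) * (t i - if i ∈ s then 1 else 0) =
      ∑ i, lam i * t i - ∑ i ∈ s, lam i - c * (∑ i, t i - #s) := by
    simp only [mul_sub, sub_mul, sum_sub_distrib, mul_ite, mul_one, mul_zero, sum_ite_mem,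
      univ_inter, ← mul_sum, sum_const, nsmul_eq_mul]
    ring
  have := sum_nonpos (s := univ) fun i _ => hterm i
  rw [hexpand, hsum, sub_self, mul_zero] at this
  linarith

theorem Matrix.mulVec_injective_of_rank_eq_card {m n K : Type*} [Fintype n] [Field K]
    {V : Matrix m n K} (hV : V.rank = Fintype.card n) : Function.Injective V.mulVec := by
  have h := LinearMap.finrank_range_add_finrank_ker V.mulVecLin
  rw [← rank, hV, Module.finrank_fintype_fun_eq_card, add_eq_left,
    Submodule.finrank_eq_zero] at h
  exact LinearMap.ker_eq_bot.mp h

namespace Matrix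

variable {m n 𝕜 : Type*} [Fintype m] [Fintype n] [RCLike 𝕜]

theorem trace_conjTranspose_mul_diagonal_mul [DecidableEq m] (K : Matrix m n 𝕜) (d : m → ℝ) :
    trace (Kᴴ * diagonal (fun i => (d i : 𝕜)) * K) = ((∑ i, d i * ∑ j, ‖K i j‖ ^ 2 : ℝ) : 𝕜) := by
  simp only [trace, diag_apply, mul_apply, diagonal_apply, mul_ite, mul_zero, sum_ite_eq',
    mem_univ, if_true, conjTranspose_apply, RCLike.star_def]
  rw [sum_comm]
  push_cast
  refine sum_congr rfl fun i _ => ?_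
  rw [mul_sum]
  refine sum_congr rfl fun j _ => ?_
  rw [← RCLike.conj_mul]
  ring

variable [DecidableEq n]

theorem PosSemidef.posSemidef_sqrt {A : Matrix n n 𝕜} (hA : A.PosSemidef) :
    hA.sqrt.PosSemidef := by
  have hd : (diagonal ((↑) ∘ Real.sqrt ∘ hA.1.eigenvalues) : Matrix n n 𝕜).PosSemidef :=
    posSemidef_diagonal_iff.mpr fun i => RCLike.ofReal_nonneg.mpr (Real.sqrt_nonneg _)
  simpa only [PosSemidef.sqrt, star_eq_conjTranspose] using
    hd.mul_mul_conjTranspose_same hA.1.eigenvectorUnitary.1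

theorem PosSemidef.sqrt_mul_self {A : Matrix n n 𝕜} (hA : A.PosSemidef) :
    hA.sqrt * hA.sqrt = A := by
  set E : Matrix n n 𝕜 := hA.1.eigenvectorUnitary.1
  set D : Matrix n n 𝕜 := diagonal ((↑) ∘ Real.sqrt ∘ hA.1.eigenvalues)
  have hE : star E * E = 1 := Unitary.coe_star_mul_self _
  have hD : D * D = diagonal (RCLike.ofReal ∘ hA.1.eigenvalues) := by
    rw [diagonal_mul_diagonal]
    congr 1; funext i
    simp only [Function.comp_apply, ← RCLike.ofReal_mul,
      Real.mul_self_sqrt (hA.eigenvalues_nonneg i)]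
  conv_rhs => rw [hA.1.spectral_theorem, Unitary.conjStarAlgAut_apply]
  calc E * D * star E * (E * D * star E) = E * D * (star E * E) * D * star E := by
        simp only [Matrix.mul_assoc]
    _ = _ := by rw [hE, Matrix.mul_one, Matrix.mul_assoc E D D, hD]

theorem PosDef.isUnit_sqrt {A : Matrix n n 𝕜} (hA : A.PosDef) : IsUnit hA.posSemidef.sqrt := by
  rw [isUnit_iff_isUnit_det]
  refine isUnit_of_mul_isUnit_left (y := hA.posSemidef.sqrt.det) ?_
  rw [← det_mul, hA.posSemidef.sqrt_mul_self, ← isUnit_iff_isUnit_det]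
  exact hA.isUnit

theorem PosDef.sqrt_inv_mul_mul_sqrt_inv {A : Matrix n n 𝕜} (hA : A.PosDef) :
    hA.inv.posSemidef.sqrt * A * hA.inv.posSemidef.sqrt = 1 := by
  refine mul_eq_one_comm.mp ?_
  rw [← Matrix.mul_assoc, hA.inv.posSemidef.sqrt_mul_self,
    nonsing_inv_mul _ ((isUnit_iff_isUnit_det A).mp hA.isUnit)]

variable {K : Matrix m n 𝕜}

theorem sum_sum_norm_sq_eq_card_of_conjTranspose_mul_self_eq_one (hK : Kᴴ * K = 1) :
    ∑ i, ∑ j, ‖K i j‖ ^ 2 = Fintype.card n := by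
  classical
  have h := trace_conjTranspose_mul_diagonal_mul K 1
  simp only [Pi.one_apply, RCLike.ofReal_one, diagonal_one, Matrix.mul_one, hK, trace_one,
    one_mul] at h
  exact_mod_cast h.symm

theorem sum_norm_sq_le_one_of_conjTranspose_mul_self_eq_one (hK : Kᴴ * K = 1) (i : m) :
    ∑ j, ‖K i j‖ ^ 2 ≤ 1 := by
  classical
  set P := K * Kᴴ
  have hP : Pᴴ * P = P := by
    rw [conjTranspose_mul, conjTranspose_conjTranspose, Matrix.mul_assoc, ← Matrix.mul_assoc Kᴴ,
      hK, Matrix.one_mul]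
  -- `P` is an orthogonal projection, hence so is `1 - P`, whose diagonal is then nonnegative
  have hQ : (1 - P).PosSemidef := by
    have h : (1 - P)ᴴ * (1 - P) = 1 - P := by
      rw [conjTranspose_sub, conjTranspose_one, sub_mul, mul_sub, mul_sub, Matrix.one_mul,
        Matrix.one_mul, Matrix.mul_one, hP, (isHermitian_mul_conjTranspose_self K).eq]
      abel
    exact h ▸ posSemidef_conjTranspose_mul_self (1 - P)
  have hPii : P i i = ((∑ j, ‖K i j‖ ^ 2 : ℝ) : 𝕜) := by
    simp only [P, mul_apply, conjTranspose_apply, RCLike.star_def, RCLike.mul_conj]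
    push_cast; rfl
  have := hQ.diag_nonneg (i := i)
  rw [sub_apply, one_apply_eq, hPii, ← RCLike.ofReal_one, ← RCLike.ofReal_sub,
    RCLike.ofReal_nonneg] at this
  linarith

theorem trace_conjTranspose_mul_diagonal_mul_le_sum [DecidableEq m] (hK : Kᴴ * K = 1)
    (d : m → ℝ) (s : Finset m) (hs : ∀ i ∈ s, ∀ j ∉ s, d j ≤ d i) (hcard : #s = Fintype.card n) :
    trace (Kᴴ * diagonal (fun i => (d i : 𝕜)) * K) ≤ ((∑ i ∈ s, d i : ℝ) : 𝕜) := by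
  rw [trace_conjTranspose_mul_diagonal_mul, RCLike.ofReal_le_ofReal]
  refine sum_mul_le_sum_of_sum_eq_card s d _ hs (fun i => by positivity)
    (sum_norm_sq_le_one_of_conjTranspose_mul_self_eq_one hK) ?_
  rw [sum_sum_norm_sq_eq_card_of_conjTranspose_mul_self_eq_one hK, hcard]

theorem exists_conjTranspose_mul_self_eq_one_and_trace_eq (W : Matrix m n 𝕜)
    (hW : Function.Injective W.mulVec) (C : Matrix m m 𝕜) :
    ∃ Q : Matrix m n 𝕜, Qᴴ * Q = 1 ∧
      trace ((Wᴴ * W)⁻¹ * (Wᴴ * C * W)) = trace (Qᴴ * C * Q) := by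
  have hG := PosDef.conjTranspose_mul_self W hW
  set R := hG.inv.posSemidef.sqrt
  have hR : Rᴴ = R := hG.inv.posSemidef.posSemidef_sqrt.1
  have hRR : R * R = (Wᴴ * W)⁻¹ := hG.inv.posSemidef.sqrt_mul_self
  refine ⟨W * R, ?_, ?_⟩
  · rw [conjTranspose_mul, hR, Matrix.mul_assoc, ← Matrix.mul_assoc Wᴴ, ← Matrix.mul_assoc,
      hG.sqrt_inv_mul_mul_sqrt_inv]
  · rw [← hRR, Matrix.mul_assoc, trace_mul_comm, conjTranspose_mul, hR]
    simp only [Matrix.mul_assoc]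

end Matrix

theorem stmt2_general (M T : ℕ) (hTM : T ≤ M) (A B : Matrix (Fin M) (Fin M) ℂ)
    (hB : B.PosDef)
    (lam : Fin M → ℝ) (hdec : ∀ i j : Fin M, i ≤ j → lam j ≤ lam i)
    (U : Matrix (Fin M) (Fin M) ℂ) (hU : U ∈ Matrix.unitaryGroup (Fin M) ℂ)
    (hC : hB.posSemidef.sqrt⁻¹ * A * hB.posSemidef.sqrt⁻¹ =
      U * Matrix.diagonal (fun i => (lam i : ℂ)) * Uᴴ)
    (V : Matrix (Fin M) (Fin T) ℂ) (hV : V.rank = T) :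
    Matrix.trace ((Vᴴ * B * V)⁻¹ * (Vᴴ * A * V)) ≤
      ((∑ i ∈ Finset.univ.filter (fun i : Fin M => (i : ℕ) < T), lam i : ℝ) : ℂ) := by
  set S := hB.posSemidef.sqrt
  set D := Matrix.diagonal (fun i => (lam i : ℂ))
  have hS : Sᴴ = S := hB.posSemidef.posSemidef_sqrt.1
  have hSS : S * S = B := hB.posSemidef.sqrt_mul_self
  have hSu : IsUnit S := hB.isUnit_sqrt
  have hSdet : IsUnit S.det := (isUnit_iff_isUnit_det S).mp hSu
  have hA : A = S * (U * D * Uᴴ) * S := by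
    rw [← hC, ← Matrix.mul_assoc S, mul_nonsing_inv_cancel_left _ _ hSdet,
      nonsing_inv_mul_cancel_right _ _ hSdet]
  have hW : Function.Injective (S * V).mulVec := fun x y h =>
    Matrix.mulVec_injective_of_rank_eq_card (by rw [hV, Fintype.card_fin])
      (Matrix.mulVec_injective_of_isUnit hSu (by rwa [mulVec_mulVec, mulVec_mulVec]))
  obtain ⟨Q, hQ, htrace⟩ :=
    Matrix.exists_conjTranspose_mul_self_eq_one_and_trace_eq (S * V) hW (U * D * Uᴴ)
  have hK : (Uᴴ * Q)ᴴ * (Uᴴ * Q) = 1 := by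
    rw [conjTranspose_mul, conjTranspose_conjTranspose, Matrix.mul_assoc, ← Matrix.mul_assoc U,
      ← star_eq_conjTranspose, mem_unitaryGroup_iff.mp hU, Matrix.one_mul, hQ]
  calc Matrix.trace ((Vᴴ * B * V)⁻¹ * (Vᴴ * A * V))
      = Matrix.trace (((S * V)ᴴ * (S * V))⁻¹ * ((S * V)ᴴ * (U * D * Uᴴ) * (S * V))) := by
        rw [conjTranspose_mul, hS, hA, ← hSS]
        simp only [Matrix.mul_assoc]
    _ = Matrix.trace ((Uᴴ * Q)ᴴ * D * (Uᴴ * Q)) := by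
        rw [htrace, conjTranspose_mul, conjTranspose_conjTranspose]
        simp only [Matrix.mul_assoc]
    _ ≤ _ := Matrix.trace_conjTranspose_mul_diagonal_mul_le_sum hK lam
        (Finset.univ.filter (fun i : Fin M => (i : ℕ) < T))
        (fun i hi j hj => hdec i j (by simp only [mem_filter, mem_univ, true_and] at hi hj; lia))
        (by rw [Fin.card_filter_val_lt, Fintype.card_fin, min_eq_right hTM])

theorem stmt2 (M T : ℕ) (hTM : T ≤ M) (A B : Matrix (Fin M) (Fin M) ℂ)
    (hA : A.IsHermitian) (hB : B.PosDef)
    (lam : Fin M → ℝ) (hdec : ∀ i j : Fin M, i ≤ j → lam j ≤ lam i)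
    (U : Matrix (Fin M) (Fin M) ℂ) (hU : U ∈ Matrix.unitaryGroup (Fin M) ℂ)
    (hC : hB.posSemidef.sqrt⁻¹ * A * hB.posSemidef.sqrt⁻¹ =
      U * Matrix.diagonal (fun i => (lam i : ℂ)) * Uᴴ)
    (V : Matrix (Fin M) (Fin T) ℂ) (hV : V.rank = T) :
    Matrix.trace ((Vᴴ * B * V)⁻¹ * (Vᴴ * A * V)) ≤
      ((∑ i ∈ Finset.univ.filter (fun i : Fin M => (i : ℕ) < T), lam i : ℝ) : ℂ) :=
  stmt2_general M T hTM A B hB lam hdec U hU hC V hV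
end

section
/- Let Λ = diag(λ₁,…,λ_M) with λ₁ ≥ … ≥ λ_M > 0 and ρ > 0. Among all V ∈ ℂ^{M×L} with VᴴV = I_L, a maximizer of tr((Vᴴ(Λ + ρ⁻¹I_M)V)⁻¹ Vᴴ Λ² V) is V = the first L columns of the M×M identity matrix, and the maximal value equals Σ_{l=1}^{L} λ_l²/(λ_l + 1/ρ). -/
/-!
Write `A = diag(a)`, `B = diag(b)` and `μ = b / a`. With `W = A^{1/2} V` one has
`VᴴAV = WᴴW` and `VᴴBV = Wᴴ diag(μ) W`, so the objective is `tr(diag(μ) P) = ∑ μᵢ Pᵢᵢ`, where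
`P = W (WᴴW)⁻¹ Wᴴ` is the orthogonal projection onto the column space of `W`. Its diagonal
entries lie in `[0, 1]` and sum to `rank P = L`, and over such weights `∑ μᵢ dᵢ` is maximal
when all the weight sits on the `L` largest `μᵢ`, which for decreasing `μ` are the first `L`.
The first `L` coordinate vectors attain this value.
-/

open Matrix Finset
open scoped ComplexOrder

theorem sum_mul_le_sum_of_threshold {ι : Type*} [Fintype ι] [DecidableEq ι] {s : Finset ι}
    {μ d : ι → ℝ} {t : ℝ} (hs : ∀ i ∈ s, t ≤ μ i) (hsc : ∀ i ∉ s, μ i ≤ t)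
    (hd0 : ∀ i, 0 ≤ d i) (hd1 : ∀ i, d i ≤ 1) (hsum : ∑ i, d i = #s) :
    ∑ i, μ i * d i ≤ ∑ i ∈ s, μ i := by
  -- `∑ i ∈ s, μ i - ∑ i, μ i * d i` equals the sum of these two nonnegative terms.
  have hin : 0 ≤ ∑ i ∈ s, (μ i - t) * (1 - d i) :=
    sum_nonneg fun i hi => mul_nonneg (sub_nonneg.2 (hs i hi)) (sub_nonneg.2 (hd1 i))
  have hout : 0 ≤ ∑ i ∈ sᶜ, (t - μ i) * d i :=
    sum_nonneg fun i hi => mul_nonneg (sub_nonneg.2 (hsc i (mem_compl.1 hi))) (hd0 i)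
  rw [← sum_add_sum_compl s] at hsum ⊢
  simp only [mul_sub, sub_mul, mul_one, sum_sub_distrib, ← mul_sum, sum_const,
    nsmul_eq_mul] at hin hout
  linear_combination hin + hout + t * hsum

theorem Fin.filter_val_lt_eq_map_castLEEmb {M L : ℕ} (hLM : L ≤ M) :
    univ.filter (fun i : Fin M => (i : ℕ) < L) = univ.map (Fin.castLEEmb hLM) := by
  ext i
  simp only [mem_filter, mem_univ, true_and, mem_map, Fin.castLEEmb_apply]
  exact ⟨fun h => ⟨⟨i, h⟩, rfl⟩, by rintro ⟨j, rfl⟩; exact j.isLt⟩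

theorem Antitone.sum_mul_le_sum_filter_val_lt {M L : ℕ} (hLM : L ≤ M) {μ d : Fin M → ℝ}
    (hμ : Antitone μ) (hd0 : ∀ i, 0 ≤ d i) (hd1 : ∀ i, d i ≤ 1) (hsum : ∑ i, d i = L) :
    ∑ i, μ i * d i ≤ ∑ i ∈ univ.filter (fun i : Fin M => (i : ℕ) < L), μ i := by
  have hcard : #(univ.filter fun i : Fin M => (i : ℕ) < L) = L := by
    simp [Fin.filter_val_lt_eq_map_castLEEmb hLM]
  -- For `L = M` every index lies in the filter, and any lower bound of `μ` is a threshold.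
  refine sum_mul_le_sum_of_threshold (t := if h : L < M then μ ⟨L, h⟩ else ⨅ i, μ i)
    ?_ ?_ hd0 hd1 (by rw [hsum, hcard])
  · intro i hi
    rw [mem_filter] at hi
    split_ifs with h
    · exact hμ (Fin.mk_le_mk.2 hi.2.le)
    · exact ciInf_le (Finite.bddBelow_range μ) i
  · intro i hi
    rw [mem_filter, not_and, not_lt] at hi
    rw [dif_pos ((hi (mem_univ i)).trans_lt i.isLt)]
    exact hμ (Fin.mk_le_mk.2 (hi (mem_univ i)))

theorem monotoneOn_sq_div_add_const {c : ℝ} (hc : 0 ≤ c) :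
    MonotoneOn (fun x => x ^ 2 / (x + c)) (Set.Ioi 0) := by
  intro x hx y hy hxy
  rw [Set.mem_Ioi] at hx hy
  rw [div_le_div_iff₀ (by positivity) (by positivity)]
  nlinarith [mul_nonneg (mul_nonneg hx.le hy.le) (sub_nonneg.2 hxy),
    mul_nonneg hc (mul_nonneg (sub_nonneg.2 hxy) (add_pos hx hy).le)]

namespace Matrix

section StarProjection

variable {𝕜 m n : Type*} [RCLike 𝕜] [Fintype m] [Fintype n] [DecidableEq n]

theorem IsStarProjection.diag_nonneg {P : Matrix m m 𝕜} (hP : IsStarProjection P) (i : m) :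
    0 ≤ P i i := by
  have h : Pᴴ * P = P := by
    rw [← star_eq_conjTranspose, hP.isSelfAdjoint.star_eq, hP.isIdempotentElem.eq]
  exact h ▸ (posSemidef_conjTranspose_mul_self P).diag_nonneg

theorem IsStarProjection.diag_le_one [DecidableEq m] {P : Matrix m m 𝕜}
    (hP : IsStarProjection P) (i : m) : P i i ≤ 1 := by
  simpa using hP.one_sub.diag_nonneg i

theorem isStarProjection_mul_inv_mul_conjTranspose {W : Matrix m n 𝕜}
    (hW : IsUnit (Wᴴ * W).det) : IsStarProjection (W * (Wᴴ * W)⁻¹ * Wᴴ) where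
  isIdempotentElem := by
    rw [IsIdempotentElem]
    calc W * (Wᴴ * W)⁻¹ * Wᴴ * (W * (Wᴴ * W)⁻¹ * Wᴴ)
        = W * ((Wᴴ * W)⁻¹ * (Wᴴ * W)) * (Wᴴ * W)⁻¹ * Wᴴ := by simp only [Matrix.mul_assoc]
      _ = W * (Wᴴ * W)⁻¹ * Wᴴ := by rw [nonsing_inv_mul _ hW, Matrix.mul_one]
  isSelfAdjoint := by
    rw [IsSelfAdjoint, star_eq_conjTranspose]
    simp only [conjTranspose_mul, conjTranspose_conjTranspose, conjTranspose_nonsing_inv,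
      Matrix.mul_assoc]

theorem trace_mul_inv_mul_conjTranspose {W : Matrix m n 𝕜} (hW : IsUnit (Wᴴ * W).det) :
    trace (W * (Wᴴ * W)⁻¹ * Wᴴ) = Fintype.card n := by
  rw [trace_mul_cycle, mul_nonsing_inv _ hW, trace_one]

theorem trace_inv_mul_conjTranspose_mul_diagonal_mul [DecidableEq m] (W : Matrix m n 𝕜)
    (μ : m → 𝕜) :
    trace ((Wᴴ * W)⁻¹ * (Wᴴ * diagonal μ * W)) = ∑ i, μ i * (W * (Wᴴ * W)⁻¹ * Wᴴ) i i := by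
  have hcycle : (Wᴴ * W)⁻¹ * (Wᴴ * diagonal μ * W) =
      ((Wᴴ * W)⁻¹ * Wᴴ) * (diagonal μ * W) := by
    simp only [Matrix.mul_assoc]
  rw [hcycle, trace_mul_comm, trace]
  simp only [diag_apply, Matrix.mul_assoc, diagonal_mul]

end StarProjection

theorem IsStarProjection.sum_mul_diag_le_sum_filter_val_lt {M L : ℕ} (hLM : L ≤ M)
    {P : Matrix (Fin M) (Fin M) ℂ} (hP : IsStarProjection P) (htr : trace P = L)
    {μ : Fin M → ℝ} (hμ : Antitone μ) :
    ∑ i, (μ i : ℂ) * P i i ≤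
      ((∑ i ∈ univ.filter (fun i : Fin M => (i : ℕ) < L), μ i : ℝ) : ℂ) := by
  have hPd : ∀ i, P i i = ((P i i).re : ℂ) := fun i =>
    Complex.eq_re_of_ofReal_le (r := 0) (by rw [Complex.ofReal_zero]; exact hP.diag_nonneg i)
  set d : Fin M → ℝ := fun i => (P i i).re
  have hd0 : ∀ i, 0 ≤ d i := fun i => Complex.zero_le_real.1 <| by
    rw [← hPd i]; exact hP.diag_nonneg i
  have hd1 : ∀ i, d i ≤ 1 := fun i => Complex.real_le_real.1 <| by
    rw [← hPd i, Complex.ofReal_one]; exact hP.diag_le_one i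
  have hdsum : ∑ i, d i = L := by
    have htr' : ((∑ i, d i : ℝ) : ℂ) = L := by
      rw [← htr, trace]
      push_cast
      exact sum_congr rfl fun i _ => (hPd i).symm
    exact_mod_cast htr'
  calc ∑ i, (μ i : ℂ) * P i i = ((∑ i, μ i * d i : ℝ) : ℂ) := by
        push_cast
        exact sum_congr rfl fun i _ => by rw [← hPd i]
    _ ≤ _ := Complex.real_le_real.2 (hμ.sum_mul_le_sum_filter_val_lt hLM hd0 hd1 hdsum)

theorem conjTranspose_mul_diagonal_mul_eq_sqrt {m n : Type*} [Fintype m] [DecidableEq m]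
    {a : m → ℝ} (ha : ∀ i, 0 < a i) (V : Matrix m n ℂ) (c : m → ℝ) :
    Vᴴ * diagonal (fun i => (c i : ℂ)) * V =
      (diagonal (fun i => (√(a i) : ℂ)) * V)ᴴ * diagonal (fun i => ((c i / a i : ℝ) : ℂ)) *
        (diagonal (fun i => (√(a i) : ℂ)) * V) := by
  have hmid : diagonal (fun i => (c i : ℂ)) = (diagonal fun i => (√(a i) : ℂ))ᴴ *
      diagonal (fun i => ((c i / a i : ℝ) : ℂ)) * diagonal (fun i => (√(a i) : ℂ)) := by
    rw [diagonal_conjTranspose, diagonal_mul_diagonal, diagonal_mul_diagonal]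
    congr 1
    funext i
    have hsqrt : √(a i) * (c i / a i) * √(a i) = c i := by
      rw [mul_right_comm, Real.mul_self_sqrt (ha i).le, mul_div_cancel₀ _ (ha i).ne']
    simpa [Complex.conj_ofReal] using congrArg (fun x : ℝ => (x : ℂ)) hsqrt.symm
  rw [hmid]
  simp only [conjTranspose_mul, Matrix.mul_assoc]

theorem trace_inv_mul_le_sum_filter_val_lt {M L : ℕ} (hLM : L ≤ M) {a b : Fin M → ℝ}
    (ha : ∀ i, 0 < a i) (hba : Antitone fun i => b i / a i) {V : Matrix (Fin M) (Fin L) ℂ}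
    (hV : Vᴴ * V = 1) :
    trace ((Vᴴ * diagonal (fun i => (a i : ℂ)) * V)⁻¹ *
        (Vᴴ * diagonal (fun i => (b i : ℂ)) * V)) ≤
      ((∑ i ∈ univ.filter (fun i : Fin M => (i : ℕ) < L), b i / a i : ℝ) : ℂ) := by
  set W := diagonal (fun i => (√(a i) : ℂ)) * V
  have hG : Vᴴ * diagonal (fun i => (a i : ℂ)) * V = Wᴴ * W :=
    calc Vᴴ * diagonal (fun i => (a i : ℂ)) * V
        = Wᴴ * diagonal (fun i => ((a i / a i : ℝ) : ℂ)) * W :=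
          conjTranspose_mul_diagonal_mul_eq_sqrt ha V a
      _ = Wᴴ * W := by simp [div_self (ha _).ne']
  have hVinj : Function.Injective V.mulVec := fun x y h => by
    simpa [mulVec_mulVec, hV] using congrArg (Vᴴ *ᵥ ·) h
  have hGdet : IsUnit (Wᴴ * W).det := by
    rw [← hG, ← isUnit_iff_isUnit_det]
    exact (PosDef.conjTranspose_mul_mul_same
      (PosDef.diagonal fun i => by exact_mod_cast ha i) hVinj).isUnit
  have htr : trace (W * (Wᴴ * W)⁻¹ * Wᴴ) = L := by
    rw [trace_mul_inv_mul_conjTranspose hGdet, Fintype.card_fin]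
  rw [hG, conjTranspose_mul_diagonal_mul_eq_sqrt ha V b,
    trace_inv_mul_conjTranspose_mul_diagonal_mul]
  exact (isStarProjection_mul_inv_mul_conjTranspose hGdet).sum_mul_diag_le_sum_filter_val_lt
    hLM htr hba

theorem submatrix_one_conjTranspose_mul_diagonal_mul {α m n : Type*} [CommSemiring α]
    [StarRing α] [Fintype m] [DecidableEq m] [DecidableEq n] (e : n ↪ m) (d : m → α) :
    ((1 : Matrix m m α).submatrix id e)ᴴ * diagonal d * (1 : Matrix m m α).submatrix id e =
      diagonal (d ∘ e) := by
  rw [conjTranspose_submatrix, conjTranspose_one]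
  ext i j
  simp only [mul_apply, submatrix_apply, one_apply, diagonal_apply, id_eq, Function.comp_apply]
  split_ifs with h <;> simp [h]

theorem inv_diagonal_of_ne_zero {K n : Type*} [Field K] [Fintype n] [DecidableEq n]
    {v : n → K} (hv : ∀ i, v i ≠ 0) : (diagonal v)⁻¹ = diagonal fun i => (v i)⁻¹ := by
  refine inv_eq_left_inv ?_
  rw [diagonal_mul_diagonal, ← diagonal_one]
  exact congrArg diagonal (funext fun i => inv_mul_cancel₀ (hv i))

theorem trace_inv_mul_of_first_columns {K : Type*} [Field K] [StarRing K] {M L : ℕ}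
    (hLM : L ≤ M) {a : Fin M → K} (ha : ∀ i, a i ≠ 0) (b : Fin M → K) :
    let V₀ : Matrix (Fin M) (Fin L) K := of fun i j => if (i : ℕ) = (j : ℕ) then 1 else 0
    trace ((V₀ᴴ * diagonal a * V₀)⁻¹ * (V₀ᴴ * diagonal b * V₀)) =
      ∑ i ∈ univ.filter (fun i : Fin M => (i : ℕ) < L), b i / a i := by
  intro V₀
  have hV₀ : V₀ = (1 : Matrix (Fin M) (Fin M) K).submatrix id (Fin.castLEEmb hLM) := by
    ext i j
    simp [V₀, one_apply, Fin.ext_iff]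
  rw [hV₀, submatrix_one_conjTranspose_mul_diagonal_mul,
    submatrix_one_conjTranspose_mul_diagonal_mul,
    inv_diagonal_of_ne_zero (v := a ∘ _) fun j => ha _, diagonal_mul_diagonal, trace_diagonal,
    Fin.filter_val_lt_eq_map_castLEEmb hLM, sum_map]
  simp [div_eq_inv_mul]

end Matrix

theorem stmt5 (M L : ℕ) (hLM : L ≤ M) (lam : Fin M → ℝ) (hpos : ∀ i, 0 < lam i)
    (hdec : ∀ i j : Fin M, i ≤ j → lam j ≤ lam i) (ρ : ℝ) (hρ : 0 < ρ)
    (Λ : Matrix (Fin M) (Fin M) ℂ) (hΛ : Λ = Matrix.diagonal fun i => (lam i : ℂ))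
    (V₀ : Matrix (Fin M) (Fin L) ℂ)
    (hV₀ : V₀ = Matrix.of fun (i : Fin M) (j : Fin L) => if (i : ℕ) = (j : ℕ) then 1 else 0) :
    (∀ V : Matrix (Fin M) (Fin L) ℂ, Vᴴ * V = 1 →
      Matrix.trace ((Vᴴ * (Λ + (ρ : ℂ)⁻¹ • (1 : Matrix (Fin M) (Fin M) ℂ)) * V)⁻¹ *
          (Vᴴ * (Λ * Λ) * V)) ≤
        ((∑ l ∈ Finset.univ.filter (fun i : Fin M => (i : ℕ) < L),
            lam l ^ 2 / (lam l + 1 / ρ) : ℝ) : ℂ)) ∧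
    Matrix.trace ((V₀ᴴ * (Λ + (ρ : ℂ)⁻¹ • (1 : Matrix (Fin M) (Fin M) ℂ)) * V₀)⁻¹ *
        (V₀ᴴ * (Λ * Λ) * V₀)) =
      ((∑ l ∈ Finset.univ.filter (fun i : Fin M => (i : ℕ) < L),
          lam l ^ 2 / (lam l + 1 / ρ) : ℝ) : ℂ) := by
  have ha : ∀ i, 0 < lam i + 1 / ρ := fun i => by have := hpos i; positivity
  have hA : Λ + (ρ : ℂ)⁻¹ • (1 : Matrix (Fin M) (Fin M) ℂ) =
      diagonal fun i => ((lam i + 1 / ρ : ℝ) : ℂ) := by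
    rw [hΛ, smul_one_eq_diagonal, diagonal_add]
    push_cast [one_div]
    rfl
  have hB : Λ * Λ = diagonal fun i => ((lam i ^ 2 : ℝ) : ℂ) := by
    rw [hΛ, diagonal_mul_diagonal]
    push_cast
    simp only [sq]
  have hanti : Antitone fun i => lam i ^ 2 / (lam i + 1 / ρ) := fun i j hij =>
    monotoneOn_sq_div_add_const (by positivity) (hpos j) (hpos i) (hdec i j hij)
  rw [hA, hB]
  refine ⟨fun V hV => trace_inv_mul_le_sum_filter_val_lt hLM ha hanti hV, ?_⟩
  rw [hV₀, trace_inv_mul_of_first_columns hLM (fun i => Complex.ofReal_ne_zero.2 (ha i).ne'),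
    Complex.ofReal_sum]
  push_cast
  rfl
end

section
/- (Schur-convexity of the truncated sum) Fix ρ > 0 and L ≤ M. Define φ(x) = Σ_{l=1}^{L} x_l²/(x_l + 1/ρ) on vectors x ∈ ℝ^M with x₁ ≥ x₂ ≥ … ≥ x_M > 0. If λ, μ are two such decreasing positive vectors with λ majorizing μ (i.e., Σ_{i=1}^{k} λᵢ ≥ Σ_{i=1}^{k} μᵢ for all k, with equality at k = M), then φ(λ) ≥ φ(μ). -/
open Finset

/-- Abel summation bound: if `c` is nonnegative and antitone and all partial sums of `e`
up to `L` are nonnegative, then `∑ c l * e l ≥ c L * ∑ e l`. -/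
lemma abel_key (c e : ℕ → ℝ) (L : ℕ)
    (hc0 : ∀ l, 0 ≤ c l) (hcmono : ∀ i j : ℕ, i ≤ j → c j ≤ c i)
    (hd : ∀ k, k ≤ L → 0 ≤ ∑ l ∈ range k, e l) :
    c L * ∑ l ∈ range L, e l ≤ ∑ l ∈ range L, c l * e l := by
  induction L with
  | zero => simp
  | succ n ih =>
    have h1 : c n * ∑ l ∈ range n, e l ≤ ∑ l ∈ range n, c l * e l :=
      ih (fun k hk => hd k (hk.trans n.le_succ))
    have hdn : 0 ≤ ∑ l ∈ range (n + 1), e l := hd (n + 1) le_rfl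
    rw [Finset.sum_range_succ, Finset.sum_range_succ]
    have h2 : c (n + 1) * (∑ l ∈ range n, e l + e n) ≤
        c n * (∑ l ∈ range n, e l + e n) := by
      apply mul_le_mul_of_nonneg_right (hcmono n (n + 1) n.le_succ)
      simpa [Finset.sum_range_succ] using hdn
    nlinarith [h1, h2]

/-- Convert a sum over `Fin M` filtered by `i < k` to a sum over `range k`. -/
lemma filter_sum_eq (M k : ℕ) (hk : k ≤ M) (f : Fin M → ℝ) :
    ∑ i ∈ Finset.univ.filter (fun i : Fin M => (i : ℕ) < k), f i =
      ∑ l ∈ range k, (if h : l < M then f ⟨l, h⟩ else 0) := by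
  rw [Finset.sum_filter]
  rw [show (∑ i : Fin M, if (i : ℕ) < k then f i else 0) =
      ∑ i : Fin M, (fun l : ℕ => if l < k then (if h : l < M then f ⟨l, h⟩ else 0) else 0)
        (i : ℕ) from Finset.sum_congr rfl (fun i _ => by simp [i.isLt])]
  rw [Fin.sum_univ_eq_sum_range
    (fun l : ℕ => if l < k then (if h : l < M then f ⟨l, h⟩ else 0) else 0) M]
  rw [← Finset.sum_subset (Finset.range_subset_range.2 hk)
    (fun x _ hx => by simp only [Finset.mem_range, not_lt] at hx; simp [Nat.not_lt.2 hx])]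
  exact Finset.sum_congr rfl (fun l hl => by simp [Finset.mem_range.1 hl])

theorem stmt8 (M L : ℕ) (hLM : L ≤ M) (ρ : ℝ) (hρ : 0 < ρ)
    (lam mu : Fin M → ℝ) (hlampos : ∀ i, 0 < lam i) (hmupos : ∀ i, 0 < mu i)
    (hlamdec : ∀ i j : Fin M, i ≤ j → lam j ≤ lam i)
    (hmudec : ∀ i j : Fin M, i ≤ j → mu j ≤ mu i)
    (hmaj : ∀ k : ℕ, k ≤ M →
      ∑ i ∈ Finset.univ.filter (fun i : Fin M => (i : ℕ) < k), mu i ≤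
        ∑ i ∈ Finset.univ.filter (fun i : Fin M => (i : ℕ) < k), lam i)
    (heq : ∑ i, lam i = ∑ i, mu i) :
    ∑ l ∈ Finset.univ.filter (fun i : Fin M => (i : ℕ) < L), mu l ^ 2 / (mu l + 1 / ρ) ≤
      ∑ l ∈ Finset.univ.filter (fun i : Fin M => (i : ℕ) < L), lam l ^ 2 / (lam l + 1 / ρ) := by
  set a : ℝ := 1 / ρ with ha_def
  have ha : 0 < a := by positivity
  -- extend lam, mu to ℕ by 0
  set La : ℕ → ℝ := fun l => if h : l < M then lam ⟨l, h⟩ else 0 with hLa_def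
  set Mu : ℕ → ℝ := fun l => if h : l < M then mu ⟨l, h⟩ else 0 with hMu_def
  have hLa0 : ∀ l, 0 ≤ La l := by
    intro l; simp only [hLa_def]; split
    · exact (hlampos _).le
    · exact le_rfl
  have hMu0 : ∀ l, 0 ≤ Mu l := by
    intro l; simp only [hMu_def]; split
    · exact (hmupos _).le
    · exact le_rfl
  have hLadec : ∀ i j : ℕ, i ≤ j → La j ≤ La i := by
    intro i j hij
    simp only [hLa_def]
    by_cases hj : j < M
    · have hi : i < M := lt_of_le_of_lt hij hj
      simp only [dif_pos hj, dif_pos hi]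
      exact hlamdec ⟨i, hi⟩ ⟨j, hj⟩ hij
    · simp only [dif_neg hj]
      exact hLa0 i
  have hMudec : ∀ i j : ℕ, i ≤ j → Mu j ≤ Mu i := by
    intro i j hij
    simp only [hMu_def]
    by_cases hj : j < M
    · have hi : i < M := lt_of_le_of_lt hij hj
      simp only [dif_pos hj, dif_pos hi]
      exact hmudec ⟨i, hi⟩ ⟨j, hj⟩ hij
    · simp only [dif_neg hj]
      exact hMu0 i
  -- the slope coefficients
  set c : ℕ → ℝ := fun l => 1 - a ^ 2 / ((La l + a) * (Mu l + a)) with hc_def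
  have hP : ∀ l, 0 < (La l + a) * (Mu l + a) := fun l =>
    mul_pos (by linarith [hLa0 l]) (by linarith [hMu0 l])
  have hPa : ∀ l, a ^ 2 ≤ (La l + a) * (Mu l + a) := by
    intro l
    nlinarith [hLa0 l, hMu0 l, ha]
  have hc0 : ∀ l, 0 ≤ c l := by
    intro l
    have : a ^ 2 / ((La l + a) * (Mu l + a)) ≤ 1 :=
      (div_le_one (hP l)).2 (hPa l)
    simp only [hc_def]; linarith
  have hcmono : ∀ i j : ℕ, i ≤ j → c j ≤ c i := by
    intro i j hij
    simp only [hc_def, sub_le_sub_iff_left]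
    apply div_le_div_of_nonneg_left (by positivity) (hP j)
    apply mul_le_mul (by linarith [hLadec i j hij]) (by linarith [hMudec i j hij])
      (by linarith [hMu0 j]) (by linarith [hLa0 i, ha])
  set e : ℕ → ℝ := fun l => La l - Mu l with he_def
  -- partial sums of e are nonnegative
  have hd : ∀ k, k ≤ L → 0 ≤ ∑ l ∈ range k, e l := by
    intro k hk
    have hkM : k ≤ M := hk.trans hLM
    have h1 := hmaj k hkM
    rw [filter_sum_eq M k hkM lam, filter_sum_eq M k hkM mu] at h1
    have : ∑ l ∈ range k, e l = (∑ l ∈ range k, La l) - ∑ l ∈ range k, Mu l := by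
      simp [he_def, Finset.sum_sub_distrib]
    rw [this]
    have hLeq : ∀ l ∈ range k, (if h : l < M then lam ⟨l, h⟩ else 0) = La l := fun l _ => rfl
    have hMeq : ∀ l ∈ range k, (if h : l < M then mu ⟨l, h⟩ else 0) = Mu l := fun l _ => rfl
    rw [Finset.sum_congr rfl hLeq, Finset.sum_congr rfl hMeq] at h1
    linarith
  -- pointwise identity
  have hpt : ∀ l ∈ range L,
      La l ^ 2 / (La l + a) - Mu l ^ 2 / (Mu l + a) = c l * e l := by
    intro l hl
    have hx : La l + a ≠ 0 := by linarith [hLa0 l]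
    have hy : Mu l + a ≠ 0 := by linarith [hMu0 l]
    simp only [hc_def, he_def]
    field_simp
    ring
  -- rewrite the goal
  rw [filter_sum_eq M L hLM (fun i => mu i ^ 2 / (mu i + 1 / ρ)),
    filter_sum_eq M L hLM (fun i => lam i ^ 2 / (lam i + 1 / ρ))]
  have hgoalL : ∀ l ∈ range L,
      (if h : l < M then lam ⟨l, h⟩ ^ 2 / (lam ⟨l, h⟩ + 1 / ρ) else 0) =
        La l ^ 2 / (La l + a) := by
    intro l hl
    have hlM : l < M := lt_of_lt_of_le (Finset.mem_range.1 hl) hLM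
    simp [hLa_def, hlM, ha_def]
  have hgoalM : ∀ l ∈ range L,
      (if h : l < M then mu ⟨l, h⟩ ^ 2 / (mu ⟨l, h⟩ + 1 / ρ) else 0) =
        Mu l ^ 2 / (Mu l + a) := by
    intro l hl
    have hlM : l < M := lt_of_lt_of_le (Finset.mem_range.1 hl) hLM
    simp [hMu_def, hlM, ha_def]
  rw [Finset.sum_congr rfl hgoalL, Finset.sum_congr rfl hgoalM]
  rw [← sub_nonneg, ← Finset.sum_sub_distrib]
  rw [Finset.sum_congr rfl hpt]
  have habel := abel_key c e L hc0 hcmono hd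
  have : 0 ≤ c L * ∑ l ∈ range L, e l :=
    mul_nonneg (hc0 L) (hd L le_rfl)
  linarith
end

section
/- (MSE decreases with channel correlation, Corollary 1) Let λ, μ ∈ ℝ^M be decreasing positive vectors with Σᵢ λᵢ = Σᵢ μᵢ = M and λ majorizing μ. Fix ρ > 0 and L ≤ M. Define MSE(x) = M − Σ_{l=1}^{L} x_l²/(x_l + 1/ρ). Then MSE(λ) ≤ MSE(μ). -/
/-- Convexity gradient inequality for `g x = x^2/(x+c)`. -/
lemma stmt9_key (c x y : ℝ) (hc : 0 < c) (hx : 0 ≤ x) (hy : 0 ≤ y) :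
    (1 - c ^ 2 / (x + c) ^ 2) * (y - x) ≤ y ^ 2 / (y + c) - x ^ 2 / (x + c) := by
  have hxc : 0 < x + c := by linarith
  have hyc : 0 < y + c := by linarith
  have h : y ^ 2 / (y + c) - x ^ 2 / (x + c) - (1 - c ^ 2 / (x + c) ^ 2) * (y - x)
      = c ^ 2 * (y - x) ^ 2 / ((y + c) * (x + c) ^ 2) := by
    field_simp
    ring
  have h2 : 0 ≤ c ^ 2 * (y - x) ^ 2 / ((y + c) * (x + c) ^ 2) := by positivity
  linarith

/-- Sum over the filtered `Fin` set equals a range sum of the extended function. -/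
lemma stmt9_filt (M k : ℕ) (hk : k ≤ M) (f : Fin M → ℝ) :
    ∑ i ∈ Finset.univ.filter (fun i : Fin M => (i : ℕ) < k), f i
      = ∑ i ∈ Finset.range k, (if h : i < M then f ⟨i, h⟩ else 0) := by
  rw [Finset.sum_filter]
  have h1 : ∀ i : Fin M, (if (i:ℕ) < k then f i else 0)
      = (fun n => if n < k then (if h : n < M then f ⟨n, h⟩ else 0) else 0) (i : ℕ) := by
    intro i; simp [i.isLt]
  rw [Finset.sum_congr rfl (fun i _ => h1 i),
    Fin.sum_univ_eq_sum_range (fun n => if n < k then (if h : n < M then f ⟨n, h⟩ else 0) else 0) M,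
    ← Finset.sum_filter]
  congr 1
  ext i
  simp only [Finset.mem_filter, Finset.mem_range]
  omega

/-- Abel-summation lower bound for a decreasing weight against nonnegative prefix sums. -/
lemma stmt9_abel (w d : ℕ → ℝ) (L : ℕ)
    (hw : ∀ i j, i ≤ j → j ≤ L → w j ≤ w i)
    (hD : ∀ k, k ≤ L → 0 ≤ ∑ i ∈ Finset.range k, d i) :
    ∀ n, n ≤ L → w n * ∑ i ∈ Finset.range n, d i ≤ ∑ i ∈ Finset.range n, w i * d i := by
  intro n
  induction n with
  | zero => simp
  | succ n ih =>
    intro hn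
    have ih' := ih (le_of_lt (Nat.lt_of_lt_of_le (Nat.lt_succ_self n) hn))
    rw [Finset.sum_range_succ, Finset.sum_range_succ]
    have hD' := hD n (le_of_lt (Nat.lt_of_lt_of_le (Nat.lt_succ_self n) hn))
    have hw1 := hw n (n + 1) (Nat.le_succ n) hn
    have hD2 := hD (n + 1) hn
    rw [Finset.sum_range_succ] at hD2
    nlinarith [mul_nonneg (sub_nonneg.2 hw1) hD2]

theorem stmt9 (M L : ℕ) (hLM : L ≤ M) (ρ : ℝ) (hρ : 0 < ρ)
    (lam mu : Fin M → ℝ) (hlampos : ∀ i, 0 < lam i) (hmupos : ∀ i, 0 < mu i)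
    (hlamdec : ∀ i j : Fin M, i ≤ j → lam j ≤ lam i)
    (hmudec : ∀ i j : Fin M, i ≤ j → mu j ≤ mu i)
    (hlamsum : ∑ i, lam i = M) (hmusum : ∑ i, mu i = M)
    (hmaj : ∀ k : ℕ, k ≤ M →
      ∑ i ∈ Finset.univ.filter (fun i : Fin M => (i : ℕ) < k), mu i ≤
        ∑ i ∈ Finset.univ.filter (fun i : Fin M => (i : ℕ) < k), lam i) :
    (M : ℝ) - ∑ l ∈ Finset.univ.filter (fun i : Fin M => (i : ℕ) < L),
        lam l ^ 2 / (lam l + 1 / ρ) ≤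
      (M : ℝ) - ∑ l ∈ Finset.univ.filter (fun i : Fin M => (i : ℕ) < L),
        mu l ^ 2 / (mu l + 1 / ρ) := by
  set c : ℝ := 1 / ρ with hcdef
  have hc : 0 < c := by positivity
  set a : ℕ → ℝ := fun i => if h : i < M then lam ⟨i, h⟩ else 0 with ha
  set b : ℕ → ℝ := fun i => if h : i < M then mu ⟨i, h⟩ else 0 with hb
  have ha0 : ∀ i, 0 ≤ a i := by
    intro i; simp only [ha]
    split
    · exact le_of_lt (hlampos _)
    · exact le_refl 0
  have hb0 : ∀ i, 0 ≤ b i := by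
    intro i; simp only [hb]
    split
    · exact le_of_lt (hmupos _)
    · exact le_refl 0
  -- b is decreasing on all of ℕ
  have hbdec : ∀ i j : ℕ, i ≤ j → b j ≤ b i := by
    intro i j hij
    simp only [hb]
    by_cases hjM : j < M
    · have hiM : i < M := lt_of_le_of_lt hij hjM
      rw [dif_pos hjM, dif_pos hiM]
      exact hmudec ⟨i, hiM⟩ ⟨j, hjM⟩ hij
    · rw [dif_neg hjM]
      exact hb0 i
  -- prefix sums of a dominate those of b, for k ≤ L
  have hD : ∀ k, k ≤ L → 0 ≤ ∑ i ∈ Finset.range k, (a i - b i) := by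
    intro k hk
    have hkM : k ≤ M := le_trans hk hLM
    have := hmaj k hkM
    rw [stmt9_filt M k hkM mu, stmt9_filt M k hkM lam] at this
    rw [Finset.sum_sub_distrib]
    simp only [ha, hb]
    linarith
  -- the weight
  set w : ℕ → ℝ := fun i => 1 - c ^ 2 / (b i + c) ^ 2 with hw
  have hwpos : ∀ i, 0 ≤ w i := by
    intro i
    have h1 : 0 < b i + c := by have := hb0 i; linarith
    have h2 : c ^ 2 ≤ (b i + c) ^ 2 := by nlinarith [hb0 i]
    have h3 : c ^ 2 / (b i + c) ^ 2 ≤ 1 := by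
      rw [div_le_one (by positivity)]
      exact h2
    simp only [hw]
    linarith
  have hwdec : ∀ i j : ℕ, i ≤ j → j ≤ L → w j ≤ w i := by
    intro i j hij _
    have hbji := hbdec i j hij
    have h1 : 0 < b j + c := by have := hb0 j; linarith
    have h2 : c ^ 2 / (b i + c) ^ 2 ≤ c ^ 2 / (b j + c) ^ 2 := by
      apply div_le_div_of_nonneg_left (by positivity) (by positivity)
      nlinarith [hb0 j]
    simp only [hw]
    linarith
  -- pointwise convexity bound
  have hpt : ∀ i, w i * (a i - b i) ≤ a i ^ 2 / (a i + c) - b i ^ 2 / (b i + c) := by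
    intro i
    exact stmt9_key c (b i) (a i) hc (hb0 i) (ha0 i)
  -- combine
  have habel := stmt9_abel w (fun i => a i - b i) L hwdec hD L le_rfl
  have h0 : 0 ≤ w L * ∑ i ∈ Finset.range L, (a i - b i) :=
    mul_nonneg (hwpos L) (hD L le_rfl)
  have hsum : 0 ≤ ∑ i ∈ Finset.range L, (a i ^ 2 / (a i + c) - b i ^ 2 / (b i + c)) := by
    calc (0:ℝ) ≤ w L * ∑ i ∈ Finset.range L, (a i - b i) := h0
    _ ≤ ∑ i ∈ Finset.range L, w i * (a i - b i) := habel
    _ ≤ ∑ i ∈ Finset.range L, (a i ^ 2 / (a i + c) - b i ^ 2 / (b i + c)) :=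
        Finset.sum_le_sum fun i _ => hpt i
  rw [Finset.sum_sub_distrib] at hsum
  have hgl : ∑ l ∈ Finset.univ.filter (fun i : Fin M => (i : ℕ) < L),
      lam l ^ 2 / (lam l + 1 / ρ) = ∑ i ∈ Finset.range L, a i ^ 2 / (a i + c) := by
    rw [stmt9_filt M L hLM (fun l => lam l ^ 2 / (lam l + 1 / ρ))]
    apply Finset.sum_congr rfl
    intro i hi
    have hiM : i < M := lt_of_lt_of_le (Finset.mem_range.mp hi) hLM
    simp only [ha, dif_pos hiM, hcdef]
  have hgm : ∑ l ∈ Finset.univ.filter (fun i : Fin M => (i : ℕ) < L),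
      mu l ^ 2 / (mu l + 1 / ρ) = ∑ i ∈ Finset.range L, b i ^ 2 / (b i + c) := by
    rw [stmt9_filt M L hLM (fun l => mu l ^ 2 / (mu l + 1 / ρ))]
    apply Finset.sum_congr rfl
    intro i hi
    have hiM : i < M := lt_of_lt_of_le (Finset.mem_range.mp hi) hLM
    simp only [hb, dif_pos hiM, hcdef]
  rw [hgl, hgm]
  linarith
end
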